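/- Let λ₁λ₂ > 0, Q(u) = (λ₁u₁² + λ₂u₂²)/2, X(u) = (u₁,u₂,Q(u)), and let C₁ ≥ 1, L ≥ 1, N > 2. There exist r₁ > 0, ρ₀ ∈ (0,1], and C_N ≥ 1, depending only on λ₁, λ₂, C₁, L, N, and ‖χ‖_∞, with the following property. Let U ⊂ ℝ² be open with U ⊆ B(0,r₁), set S_Q = X(U) and μ_Q = χ·H²⌊S_Q with χ : ℝ³ → [0,∞) bounded and supported in S_Q. For 0 < ρ ≤ ρ₀ define E^ext_{e₁} := {X(u) : u ∈ U, |n_Q(u)·e₁| ≤ ρ^{1/2}}, with e₁ = (1,0,0). Then for every tube T_ρ of direction e₁, radius C₁ρ, and length parameter L, ∫_{E^ext_{e₁}} (1 + dist(x,T_ρ)/ρ)^{−N} dμ_Q(x) ≤ C_N ρ^{3/2}. -/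

import Mathlib

noncomputable section
open MeasureTheory Metric Set Function
open scoped ENNReal RealInnerProductSpace

abbrev E3 : Type := EuclideanSpace ℝ (Fin 3)
abbrev E2 : Type := EuclideanSpace ℝ (Fin 2)

def mk3 (a b c : ℝ) : E3 := (WithLp.equiv 2 (Fin 3 → ℝ)).symm ![a, b, c]

/-- Quadratic graph parametrization `X(u) = (u₁, u₂, (l₁u₁² + l₂u₂²)/2)`. -/
def Xf (l₁ l₂ : ℝ) (u : E2) : E3 := mk3 (u 0) (u 1) ((l₁ * (u 0) ^ 2 + l₂ * (u 1) ^ 2) / 2)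

/-- Unit normal of the quadratic graph at `X(u)`. -/
def nQ (l₁ l₂ : ℝ) (u : E2) : E3 :=
  (Real.sqrt (1 + l₁ ^ 2 * (u 0) ^ 2 + l₂ ^ 2 * (u 1) ^ 2))⁻¹ •
    mk3 (-(l₁ * u 0)) (-(l₂ * u 1)) 1

/-- The tube `T(v, y₀, s₀, r, L)`. -/
def tube (v y₀ : E3) (s₀ r L : ℝ) : Set E3 :=
  {x | ‖x - ⟪x, v⟫ • v - y₀‖ ≤ r ∧ |⟪x, v⟫ - s₀| ≤ L}

/-- The surface measure `μ_Q = χ·H²⌊S_Q` of the quadratic patch `S_Q = X(U)`. -/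
def muQ (l₁ l₂ : ℝ) (U : Set E2) (χ : E3 → ℝ) : Measure E3 :=
  ((μH[2] : Measure E3).restrict (Xf l₁ l₂ '' U)).withDensity fun x => ENNReal.ofReal (χ x)

def e1 : E3 := mk3 1 0 0

/-!
On the unit disc the first component of `n_Q(u)` is `-λ₁u₁` up to a factor bounded above and
below, so `|n_Q · e₁| ≤ √ρ` confines the extreme set to the image of a strip `|u₁| ≲ √ρ`. Slice
that strip according to `k = ⌊|u₂ - a| / ρ⌋`, where `a` is the second coordinate of the tube's
axis. Every point of the tube has second coordinate within `C₁ρ` of `a`, so on the `k`-th slice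
the weight `(1 + dist(x, T)/ρ)^{-N}` is `≲ (1 + k)^{-N}`; the slice has area `≲ ρ^{3/2}`, and so
does its image under `X`, which is Lipschitz on bounded sets. Summing over `k` converges as `N > 1`.
-/

lemma norm_mk3_le (a b c : ℝ) : ‖mk3 a b c‖ ≤ |a| + |b| + |c| := by
  rw [EuclideanSpace.norm_eq, Real.sqrt_le_left (by positivity)]
  simp only [mk3, WithLp.equiv_symm_apply, Fin.sum_univ_three, Matrix.cons_val_zero,
    Matrix.cons_val_one, Matrix.cons_val, Real.norm_eq_abs, sq_abs]
  nlinarith [abs_nonneg a, abs_nonneg b, abs_nonneg c, sq_abs a, sq_abs b, sq_abs c]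

lemma inner_e1 (x : E3) : ⟪x, e1⟫ = x 0 := by
  simp [e1, mk3, PiLp.inner_apply, Fin.sum_univ_three]

lemma norm_e1 : ‖e1‖ = 1 := by
  simp [EuclideanSpace.norm_eq, e1, mk3, Fin.sum_univ_three]

lemma inner_nQ_e1 (l₁ l₂ : ℝ) (u : E2) :
    ⟪nQ l₁ l₂ u, e1⟫ = (√(1 + l₁ ^ 2 * u 0 ^ 2 + l₂ ^ 2 * u 1 ^ 2))⁻¹ * -(l₁ * u 0) := by
  simp [inner_e1, nQ, mk3]

lemma abs_sub_apply_le_of_mem_tube {v y₀ y : E3} {s₀ r L : ℝ} {i : Fin 3} (hi : v i = 0)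
    (hy : y ∈ tube v y₀ s₀ r L) : |y i - y₀ i| ≤ r := by
  simpa [hi] using (PiLp.norm_apply_le (y - ⟪y, v⟫ • v - y₀) i).trans hy.1

lemma tube_nonempty {v y₀ : E3} {s₀ r L : ℝ} (hv : ‖v‖ = 1) (hy₀ : ⟪y₀, v⟫ = 0) (hr : 0 ≤ r)
    (hL : 0 ≤ L) : (tube v y₀ s₀ r L).Nonempty := by
  have hs₀ : ⟪y₀ + s₀ • v, v⟫ = s₀ := by
    rw [inner_add_left, real_inner_smul_left, hy₀, real_inner_self_eq_norm_sq, hv]; ring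
  refine ⟨y₀ + s₀ • v, ?_, ?_⟩ <;> simp [hs₀, hr, hL]

lemma abs_sub_apply_sub_le_infDist_tube {v y₀ : E3} {s₀ r L : ℝ} {i : Fin 3} (hi : v i = 0)
    (hT : (tube v y₀ s₀ r L).Nonempty) (x : E3) :
    |x i - y₀ i| - r ≤ infDist x (tube v y₀ s₀ r L) := by
  refine (le_infDist hT).2 fun y hy => ?_
  have hxy : |x i - y i| ≤ dist x y := by
    simpa [dist_eq_norm] using PiLp.norm_apply_le (x - y) i
  have htri := abs_sub_abs_le_abs_sub (x i - y₀ i) (y i - y₀ i)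
  rw [sub_sub_sub_cancel_right] at htri
  linarith [abs_sub_apply_le_of_mem_tube hi hy]

def quadGraph (l₁ l₂ : ℝ) (p : ℝ × ℝ) : E3 := mk3 p.1 p.2 ((l₁ * p.1 ^ 2 + l₂ * p.2 ^ 2) / 2)

lemma continuous_quadGraph (l₁ l₂ : ℝ) : Continuous (quadGraph l₁ l₂) := by
  refine (PiLp.continuous_toLp 2 _).comp (continuous_pi fun i => ?_)
  fin_cases i <;> simp only [Fin.zero_eta, Fin.mk_one, Fin.reduceFinMk, Matrix.cons_val_zero,
    Matrix.cons_val_one, Matrix.cons_val] <;> fun_prop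

lemma abs_sq_sub_sq_le {x y B : ℝ} (hx : |x| ≤ B) (hy : |y| ≤ B) :
    |x ^ 2 - y ^ 2| ≤ 2 * B * |x - y| := by
  rw [sq_sub_sq, abs_mul]
  exact mul_le_mul_of_nonneg_right ((abs_add_le x y).trans (by linarith)) (abs_nonneg _)

def quadGraphLip (l₁ l₂ B : ℝ) : ℝ := 2 + B * (|l₁| + |l₂|)

lemma lipschitzOnWith_quadGraph (l₁ l₂ : ℝ) {B : ℝ} (hB : 0 ≤ B) :
    LipschitzOnWith (quadGraphLip l₁ l₂ B).toNNReal (quadGraph l₁ l₂) (closedBall 0 B) := by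
  rw [lipschitzOnWith_iff_dist_le_mul]
  intro p hp q hq
  rw [mem_closedBall_zero_iff] at hp hq
  have hd₁ : |p.1 - q.1| ≤ dist p q := by simpa [dist_eq_norm] using norm_fst_le (p - q)
  have hd₂ : |p.2 - q.2| ≤ dist p q := by simpa [dist_eq_norm] using norm_snd_le (p - q)
  have hsq₁ := abs_sq_sub_sq_le ((norm_fst_le p).trans hp) ((norm_fst_le q).trans hq)
  have hsq₂ := abs_sq_sub_sq_le ((norm_snd_le p).trans hp) ((norm_snd_le q).trans hq)
  have hz : |(l₁ * p.1 ^ 2 + l₂ * p.2 ^ 2) / 2 - (l₁ * q.1 ^ 2 + l₂ * q.2 ^ 2) / 2|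
      ≤ B * (|l₁| + |l₂|) * dist p q := by
    rw [show (l₁ * p.1 ^ 2 + l₂ * p.2 ^ 2) / 2 - (l₁ * q.1 ^ 2 + l₂ * q.2 ^ 2) / 2
      = (l₁ * (p.1 ^ 2 - q.1 ^ 2) + l₂ * (p.2 ^ 2 - q.2 ^ 2)) / 2 by ring, abs_div, abs_two]
    have := abs_add_le (l₁ * (p.1 ^ 2 - q.1 ^ 2)) (l₂ * (p.2 ^ 2 - q.2 ^ 2))
    rw [abs_mul, abs_mul] at this
    have h₁ : |l₁| * |p.1 ^ 2 - q.1 ^ 2| ≤ |l₁| * (2 * B * dist p q) := by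
      gcongr; exact hsq₁.trans (by gcongr)
    have h₂ : |l₂| * |p.2 ^ 2 - q.2 ^ 2| ≤ |l₂| * (2 * B * dist p q) := by
      gcongr; exact hsq₂.trans (by gcongr)
    linarith
  have hsub : quadGraph l₁ l₂ p - quadGraph l₁ l₂ q = mk3 (p.1 - q.1) (p.2 - q.2)
      ((l₁ * p.1 ^ 2 + l₂ * p.2 ^ 2) / 2 - (l₁ * q.1 ^ 2 + l₂ * q.2 ^ 2) / 2) := by
    ext i; fin_cases i <;> rfl
  rw [dist_eq_norm, hsub, Real.coe_toNNReal _ (by unfold quadGraphLip; positivity)]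
  calc _ ≤ _ := norm_mk3_le _ _ _
    _ ≤ dist p q + dist p q + B * (|l₁| + |l₂|) * dist p q := by gcongr
    _ = _ := by unfold quadGraphLip; ring

lemma hausdorffMeasure_image_quadGraph_le (l₁ l₂ : ℝ) {B : ℝ} (hB : 0 ≤ B) {s : Set (ℝ × ℝ)}
    (hs : s ⊆ closedBall 0 B) :
    μH[2] (quadGraph l₁ l₂ '' s) ≤ ENNReal.ofReal (quadGraphLip l₁ l₂ B ^ 2) * volume s := by
  have hK : 0 ≤ quadGraphLip l₁ l₂ B := by unfold quadGraphLip; positivity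
  have h := ((lipschitzOnWith_quadGraph l₁ l₂ hB).mono hs).hausdorffMeasure_image_le zero_le_two
  rwa [hausdorffMeasure_prod_real, ← ENNReal.ofReal.eq_def, ENNReal.ofReal_rpow_of_nonneg hK
    zero_le_two, Real.rpow_two] at h

lemma volume_abs_sub_mem_Icc_le (a : ℝ) {α β : ℝ} (hαβ : α ≤ β) :
    volume {t : ℝ | |t - a| ∈ Icc α β} ≤ ENNReal.ofReal (2 * (β - α)) := by
  have hsub : {t : ℝ | |t - a| ∈ Icc α β} ⊆ Icc (a - β) (a - α) ∪ Icc (a + α) (a + β) := by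
    rintro t ⟨h₁, h₂⟩
    rcases le_total t a with h | h
    · rw [abs_of_nonpos (by linarith)] at h₁ h₂
      exact Or.inl ⟨by linarith, by linarith⟩
    · rw [abs_of_nonneg (by linarith)] at h₁ h₂
      exact Or.inr ⟨by linarith, by linarith⟩
  calc _ ≤ volume (Icc (a - β) (a - α)) + volume (Icc (a + α) (a + β)) :=
        (measure_mono hsub).trans (measure_union_le _ _)
    _ = ENNReal.ofReal (2 * (β - α)) := by
        rw [Real.volume_Icc, Real.volume_Icc, ← ENNReal.ofReal_add (by linarith) (by linarith)]
        ring_nf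

def stripPiece (δ a ρ : ℝ) (k : ℕ) : Set (ℝ × ℝ) :=
  Icc (-δ) δ ×ˢ ({t | |t - a| ∈ Icc (k * ρ) ((k + 1) * ρ)} ∩ Icc (-1) 1)

lemma isCompact_stripPiece (δ a ρ : ℝ) (k : ℕ) : IsCompact (stripPiece δ a ρ k) :=
  isCompact_Icc.prod (isCompact_Icc.inter_left (isClosed_Icc.preimage (by fun_prop)))

lemma exists_mem_stripPiece {δ a ρ : ℝ} (hρ : 0 < ρ) {p : ℝ × ℝ} (h₁ : |p.1| ≤ δ)
    (h₂ : |p.2| ≤ 1) : ∃ k, p ∈ stripPiece δ a ρ k := by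
  refine ⟨⌊|p.2 - a| / ρ⌋₊, abs_le.1 h₁, ⟨?_, ?_⟩, abs_le.1 h₂⟩
  · rw [← le_div_iff₀ hρ]
    exact Nat.floor_le (by positivity)
  · rw [← div_le_iff₀ hρ]
    exact (Nat.lt_floor_add_one _).le

lemma stripPiece_subset_closedBall {δ a ρ B : ℝ} (hδ : δ ≤ B) (hB : 1 ≤ B) (k : ℕ) :
    stripPiece δ a ρ k ⊆ closedBall 0 B := by
  rintro p ⟨h₁, -, h₂⟩
  rw [mem_closedBall_zero_iff, Prod.norm_def, max_le_iff, Real.norm_eq_abs, Real.norm_eq_abs,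
    abs_le, abs_le]
  exact ⟨⟨by linarith [h₁.1], by linarith [h₁.2]⟩, ⟨by linarith [h₂.1], by linarith [h₂.2]⟩⟩

lemma volume_stripPiece_le {δ ρ : ℝ} (a : ℝ) (hρ : 0 ≤ ρ) (k : ℕ) :
    volume (stripPiece δ a ρ k) ≤ ENNReal.ofReal (2 * δ) * ENNReal.ofReal (2 * ρ) := by
  rw [stripPiece, Measure.volume_eq_prod, Measure.prod_prod, Real.volume_Icc]
  gcongr
  · exact le_of_eq (by ring_nf)
  · calc _ ≤ volume {t : ℝ | |t - a| ∈ Icc (k * ρ) ((k + 1) * ρ)} := measure_mono inter_subset_left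
      _ ≤ _ := volume_abs_sub_mem_Icc_le a (by gcongr; linarith)
      _ = _ := by ring_nf

def extremeWidth (l₁ l₂ : ℝ) : ℝ := √(1 + l₁ ^ 2 + l₂ ^ 2) / |l₁|

lemma abs_apply_zero_le_of_abs_inner_nQ_le {l₁ l₂ s : ℝ} (hl₁ : l₁ ≠ 0) {u : E2} (hu : ‖u‖ ≤ 1)
    (h : |⟪nQ l₁ l₂ u, e1⟫| ≤ s) : |u 0| ≤ extremeWidth l₁ l₂ * s := by
  have hu₀ : u 0 ^ 2 ≤ 1 := (sq_le_one_iff_abs_le_one _).2 ((PiLp.norm_apply_le u 0).trans hu)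
  have hu₁ : u 1 ^ 2 ≤ 1 := (sq_le_one_iff_abs_le_one _).2 ((PiLp.norm_apply_le u 1).trans hu)
  set D := 1 + l₁ ^ 2 * u 0 ^ 2 + l₂ ^ 2 * u 1 ^ 2
  have hD : 0 < √D := Real.sqrt_pos.2 (by positivity)
  have hDle : √D ≤ √(1 + l₁ ^ 2 + l₂ ^ 2) := Real.sqrt_le_sqrt (by
    nlinarith [mul_le_mul_of_nonneg_left hu₀ (sq_nonneg l₁),
      mul_le_mul_of_nonneg_left hu₁ (sq_nonneg l₂)])
  have hnormal : |u 0| * |l₁| = √D * |⟪nQ l₁ l₂ u, e1⟫| := by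
    rw [inner_nQ_e1, abs_mul, abs_inv, abs_of_pos hD, abs_neg, abs_mul]
    field_simp
  rw [extremeWidth, div_mul_eq_mul_div, le_div_iff₀ (abs_pos.2 hl₁), hnormal]
  calc √D * |⟪nQ l₁ l₂ u, e1⟫| ≤ √D * s := by gcongr
    _ ≤ _ := by gcongr; exact (abs_nonneg _).trans h

lemma image_extremeSet_subset_iUnion {l₁ l₂ ρ a : ℝ} (hl₁ : l₁ ≠ 0) (hρ : 0 < ρ) {U : Set E2}
    (hU : U ⊆ ball 0 1) :
    Xf l₁ l₂ '' {u | u ∈ U ∧ |⟪nQ l₁ l₂ u, e1⟫| ≤ √ρ} ⊆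
      ⋃ k, quadGraph l₁ l₂ '' stripPiece (extremeWidth l₁ l₂ * √ρ) a ρ k := by
  rintro _ ⟨u, ⟨huU, hu⟩, rfl⟩
  have hu1 : ‖u‖ ≤ 1 := (mem_ball_zero_iff.1 (hU huU)).le
  obtain ⟨k, hk⟩ := exists_mem_stripPiece (a := a) hρ (p := (u 0, u 1))
    (abs_apply_zero_le_of_abs_inner_nQ_le hl₁ hu1 hu) ((PiLp.norm_apply_le u 1).trans hu1)
  exact mem_iUnion.2 ⟨k, _, hk, rfl⟩

lemma one_add_rpow_neg_le {C t k N : ℝ} (hC : 0 ≤ C) (ht : 0 ≤ t) (hk : 0 ≤ k)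
    (hkt : k ≤ t + C) (hN : 0 ≤ N) : (1 + t) ^ (-N) ≤ (1 + C) ^ N * (1 + k) ^ (-N) := by
  rw [Real.rpow_neg (by linarith), Real.rpow_neg (by linarith), ← div_eq_mul_inv,
    le_div_iff₀ (by positivity), inv_mul_le_iff₀ (by positivity), ← Real.mul_rpow (by linarith)
    (by linarith)]
  exact Real.rpow_le_rpow (by linarith) (by nlinarith) hN

lemma tail_le_of_mem_image_stripPiece {l₁ l₂ δ ρ C L N s₀ : ℝ} {y₀ : E3} (hρ : 0 < ρ)
    (hC : 0 ≤ C) (hN : 0 ≤ N) (hT : (tube e1 y₀ s₀ (C * ρ) L).Nonempty) {k : ℕ} {x : E3}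
    (hx : x ∈ quadGraph l₁ l₂ '' stripPiece δ (y₀ 1) ρ k) :
    (1 + infDist x (tube e1 y₀ s₀ (C * ρ) L) / ρ) ^ (-N) ≤ (1 + C) ^ N * (1 + k) ^ (-N) := by
  obtain ⟨p, ⟨-, ⟨hkp, -⟩, -⟩, rfl⟩ := hx
  have hdist := abs_sub_apply_sub_le_infDist_tube (i := 1) rfl hT (quadGraph l₁ l₂ p)
  refine one_add_rpow_neg_le hC (div_nonneg infDist_nonneg hρ.le) k.cast_nonneg ?_ hN
  rw [div_add' _ _ _ hρ.ne', le_div_iff₀ hρ]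
  exact hkp.trans (by simpa [quadGraph, mk3] using hdist)

lemma setLIntegral_le_tsum_mul_of_subset_iUnion {α ι : Type*} [MeasurableSpace α] [Countable ι]
    {μ : Measure α} {s : Set α} {t : ι → Set α} {f : α → ℝ≥0∞} {a : ι → ℝ≥0∞} {m : ℝ≥0∞}
    (hst : s ⊆ ⋃ i, t i) (ht : ∀ i, MeasurableSet (t i)) (hf : ∀ i, ∀ x ∈ t i, f x ≤ a i)
    (hμ : ∀ i, μ (t i) ≤ m) : ∫⁻ x in s, f x ∂μ ≤ (∑' i, a i) * m := by
  calc ∫⁻ x in s, f x ∂μ ≤ ∫⁻ x in ⋃ i, t i, f x ∂μ := lintegral_mono_set hst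
    _ ≤ ∑' i, ∫⁻ x in t i, f x ∂μ := lintegral_iUnion_le _ _
    _ ≤ ∑' i, a i * m := ENNReal.tsum_le_tsum fun i => calc
        ∫⁻ x in t i, f x ∂μ ≤ ∫⁻ _ in t i, a i ∂μ := setLIntegral_mono' (ht i) (hf i)
        _ = a i * μ (t i) := setLIntegral_const _ _
        _ ≤ a i * m := by gcongr; exact hμ i
    _ = (∑' i, a i) * m := ENNReal.tsum_mul_right

lemma summable_one_add_rpow_neg {N : ℝ} (hN : 1 < N) :
    Summable fun k : ℕ => (1 + (k : ℝ)) ^ (-N) := by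
  refine ((Real.summable_one_div_nat_add_rpow 1 N).2 hN).congr fun k => ?_
  rw [abs_of_nonneg (by positivity), Real.rpow_neg (by positivity), one_div, add_comm]

lemma setLIntegral_muQ_le {l₁ l₂ M : ℝ} {U : Set E2} {χ : E3 → ℝ} (hχ : ∀ x, χ x ≤ M)
    (s : Set E3) (f : E3 → ℝ≥0∞) :
    ∫⁻ x in s, f x ∂(muQ l₁ l₂ U χ) ≤ ENNReal.ofReal M * ∫⁻ x in s, f x ∂μH[2] := by
  have hμ : muQ l₁ l₂ U χ ≤ ENNReal.ofReal M • μH[2] := calc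
    muQ l₁ l₂ U χ ≤ (μH[2].restrict (Xf l₁ l₂ '' U)).withDensity fun _ => ENNReal.ofReal M :=
        withDensity_mono (.of_forall fun x => ENNReal.ofReal_le_ofReal (hχ x))
    _ ≤ ENNReal.ofReal M • μH[2] := by
        rw [withDensity_const]; exact smul_le_smul_left _ Measure.restrict_le_self
  calc ∫⁻ x in s, f x ∂(muQ l₁ l₂ U χ) ≤ ∫⁻ x in s, f x ∂(ENNReal.ofReal M • μH[2]) :=
        lintegral_mono' (Measure.restrict_mono subset_rfl hμ) le_rfl
    _ = _ := by rw [Measure.restrict_smul, lintegral_smul_measure, smul_eq_mul]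

def extremeTailConst (l₁ l₂ C N : ℝ) : ℝ :=
  (1 + C) ^ N * (∑' k : ℕ, (1 + (k : ℝ)) ^ (-N)) *
    (quadGraphLip l₁ l₂ (1 + extremeWidth l₁ l₂) ^ 2 * (4 * extremeWidth l₁ l₂))

lemma setLIntegral_extremeSet_tail_le {l₁ l₂ C L N ρ : ℝ} (hl₁ : l₁ ≠ 0) (hC : 0 ≤ C)
    (hL : 0 ≤ L) (hN : 1 < N) (hρ : 0 < ρ) (hρ₁ : ρ ≤ 1) {U : Set E2} (hU : U ⊆ ball 0 1)
    {y₀ : E3} (hy₀ : ⟪y₀, e1⟫ = 0) (s₀ : ℝ) :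
    ∫⁻ x in Xf l₁ l₂ '' {u : E2 | u ∈ U ∧ |⟪nQ l₁ l₂ u, e1⟫| ≤ √ρ},
        ENNReal.ofReal ((1 + infDist x (tube e1 y₀ s₀ (C * ρ) L) / ρ) ^ (-N)) ∂μH[2] ≤
      ENNReal.ofReal (extremeTailConst l₁ l₂ C N * ρ ^ ((3 : ℝ) / 2)) := by
  have hc : 0 ≤ extremeWidth l₁ l₂ := by unfold extremeWidth; positivity
  have hδ : extremeWidth l₁ l₂ * √ρ ≤ 1 + extremeWidth l₁ l₂ := by
    nlinarith [Real.sqrt_le_one.2 hρ₁, Real.sqrt_nonneg ρ]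
  have hT := tube_nonempty (s₀ := s₀) norm_e1 hy₀ (mul_nonneg hC hρ.le) hL
  refine (setLIntegral_le_tsum_mul_of_subset_iUnion
    (image_extremeSet_subset_iUnion (a := y₀ 1) hl₁ hρ hU)
    (fun k => ((isCompact_stripPiece _ _ _ k).image (continuous_quadGraph l₁ l₂)).measurableSet)
    (fun k x hx => ENNReal.ofReal_le_ofReal
      (tail_le_of_mem_image_stripPiece hρ hC (by linarith) hT hx))
    (fun k => (hausdorffMeasure_image_quadGraph_le l₁ l₂ (by positivity)
      (stripPiece_subset_closedBall hδ (by linarith) k)).trans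
      (mul_le_mul_of_nonneg_left (volume_stripPiece_le _ hρ.le k) (by positivity)))).trans_eq ?_
  rw [← ENNReal.ofReal_tsum_of_nonneg (fun k => by positivity)
    ((summable_one_add_rpow_neg hN).mul_left _), tsum_mul_left, ← ENNReal.ofReal_mul
    (by positivity), ← ENNReal.ofReal_mul (by positivity), ← ENNReal.ofReal_mul (by positivity)]
  congr 1
  rw [extremeTailConst, show (3 : ℝ) / 2 = 1 / 2 + 1 by norm_num, Real.rpow_add hρ, Real.rpow_one,
    ← Real.sqrt_eq_rpow]
  ring

theorem extreme_mass_with_tails_general (l₁ l₂ C₁ L N Mχ : ℝ) (hl : 0 < l₁ * l₂)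
    (hC₁ : 1 ≤ C₁) (hL : 1 ≤ L) (hN : 2 < N) :
    ∃ r₁ : ℝ, 0 < r₁ ∧ ∃ ρ₀ ∈ Set.Ioc (0 : ℝ) 1, ∃ CN : ℝ, 1 ≤ CN ∧
      ∀ U : Set E2, IsOpen U → U ⊆ Metric.ball (0 : E2) r₁ →
      ∀ χ : E3 → ℝ, (∀ x, 0 ≤ χ x) → (∀ x, χ x ≤ Mχ) →
        Function.support χ ⊆ Xf l₁ l₂ '' U →
        ∀ ρ : ℝ, 0 < ρ → ρ ≤ ρ₀ →
        ∀ y₀ : E3, ⟪y₀, e1⟫ = 0 → ∀ s₀ : ℝ,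
          (∫⁻ x in Xf l₁ l₂ '' {u : E2 | u ∈ U ∧ |⟪nQ l₁ l₂ u, e1⟫| ≤ Real.sqrt ρ},
              ENNReal.ofReal
                ((1 + infDist x (tube e1 y₀ s₀ (C₁ * ρ) L) / ρ) ^ (-N))
              ∂(muQ l₁ l₂ U χ)) ≤
            ENNReal.ofReal (CN * ρ ^ ((3 : ℝ) / 2)) := by
  set A := extremeTailConst l₁ l₂ C₁ N
  refine ⟨1, one_pos, 1, ⟨one_pos, le_rfl⟩, max 1 (Mχ * A), le_max_left _ _, ?_⟩
  intro U _ hU χ hχ₀ hχ _ ρ hρ hρ₁ y₀ hy₀ s₀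
  have hMχ : 0 ≤ Mχ := (hχ₀ 0).trans (hχ 0)
  calc _ ≤ ENNReal.ofReal Mχ * ENNReal.ofReal (A * ρ ^ ((3 : ℝ) / 2)) :=
        (setLIntegral_muQ_le hχ _ _).trans (by
          gcongr
          exact setLIntegral_extremeSet_tail_le (left_ne_zero_of_mul hl.ne') (by linarith)
            (by linarith) (by linarith) hρ hρ₁ hU hy₀ s₀)
    _ = ENNReal.ofReal (Mχ * A * ρ ^ ((3 : ℝ) / 2)) := by rw [← ENNReal.ofReal_mul hMχ, mul_assoc]
    _ ≤ _ := ENNReal.ofReal_le_ofReal (by gcongr; exact le_max_right _ _)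

/-- extreme mass with tubular tails,
`∫_{E^ext} (1 + dist(x,T_ρ)/ρ)^{−N} dμ_Q ≤ C_N ρ^{3/2}`. -/
theorem extreme_mass_with_tails (l₁ l₂ C₁ L N Mχ : ℝ) (hl : 0 < l₁ * l₂)
    (hC₁ : 1 ≤ C₁) (hL : 1 ≤ L) (hN : 2 < N) (hMχ : 0 ≤ Mχ) :
    ∃ r₁ : ℝ, 0 < r₁ ∧ ∃ ρ₀ ∈ Set.Ioc (0 : ℝ) 1, ∃ CN : ℝ, 1 ≤ CN ∧
      ∀ U : Set E2, IsOpen U → U ⊆ Metric.ball (0 : E2) r₁ →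
      ∀ χ : E3 → ℝ, (∀ x, 0 ≤ χ x) → (∀ x, χ x ≤ Mχ) →
        Function.support χ ⊆ Xf l₁ l₂ '' U →
        ∀ ρ : ℝ, 0 < ρ → ρ ≤ ρ₀ →
        ∀ y₀ : E3, ⟪y₀, e1⟫ = 0 → ∀ s₀ : ℝ,
          (∫⁻ x in Xf l₁ l₂ '' {u : E2 | u ∈ U ∧ |⟪nQ l₁ l₂ u, e1⟫| ≤ Real.sqrt ρ},
              ENNReal.ofReal
                ((1 + infDist x (tube e1 y₀ s₀ (C₁ * ρ) L) / ρ) ^ (-N))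
              ∂(muQ l₁ l₂ U χ)) ≤
            ENNReal.ofReal (CN * ρ ^ ((3 : ℝ) / 2)) :=
  extreme_mass_with_tails_general l₁ l₂ C₁ L N Mχ hl hC₁ hL hN
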